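/- arXiv:0903.5294 — 3 statements merged into one kernel-verified Lean document; each statement's English description precedes it below -/
import Mathlib

section
/- For p ∈ [0,1] and x > 0, one has ∑_{n=1}^∞ (x/n)^p · x^n / n! ≤ 2^p (e^x − 1). -/
/-!
Since `t ↦ t ^ p` is concave, it lies below its tangent line at `t = 2`:
`t ^ p ≤ 2 ^ p * (1 - p + p * t / 2)`. Take `t = x / (n + 1)` and weight by
`w n = x ^ (n + 1) / (n + 1)!`, whose sum is `exp x - 1`. The constant part of the tangent
contributes `(1 - p) (exp x - 1)`, and the linear part is harmless because
`x / (n + 1) * w n ≤ 2 * w (n + 1)`, so it contributes at most `p (exp x - 1 - x)`.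
-/

open Real

lemma rpow_le_tangent_line {t c p : ℝ} (ht : 0 ≤ t) (hc : 0 < c) (hp0 : 0 ≤ p) (hp1 : p ≤ 1) :
    t ^ p ≤ c ^ p * (1 - p + p * (t / c)) := by
  have htc : 0 ≤ t / c := div_nonneg ht hc.le
  have bernoulli := rpow_one_add_le_one_add_mul_self (s := t / c - 1) (by linarith) hp0 hp1
  rw [add_sub_cancel] at bernoulli
  calc t ^ p = c ^ p * (t / c) ^ p := by rw [← mul_rpow hc.le htc, mul_div_cancel₀ _ hc.ne']
    _ ≤ c ^ p * (1 + p * (t / c - 1)) := by gcongr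
    _ = c ^ p * (1 - p + p * (t / c)) := by ring

lemma hasSum_pow_succ_div_factorial (x : ℝ) :
    HasSum (fun n : ℕ => x ^ (n + 1) / (n + 1).factorial) (exp x - 1) := by
  have hexp := exp_eq_exp_ℝ ▸ NormedSpace.expSeries_div_hasSum_exp x
  simpa using (hasSum_nat_add_iff' 1).2 hexp

lemma div_succ_mul_pow_succ_div_factorial_le {x : ℝ} (hx : 0 ≤ x) (n : ℕ) :
    x / (n + 1) * (x ^ (n + 1) / (n + 1).factorial) ≤ 2 * (x ^ (n + 2) / (n + 2).factorial) := by
  have hfac : ((n + 2).factorial : ℝ) = (n + 2) * (n + 1).factorial := by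
    push_cast [Nat.factorial_succ]; ring
  have hn : (1 : ℝ) / (n + 1) ≤ 2 / (n + 2) := by
    rw [div_le_div_iff₀ (by positivity) (by positivity)]; linarith
  calc x / (n + 1) * (x ^ (n + 1) / (n + 1).factorial)
      = x ^ (n + 2) / (n + 1).factorial * (1 / (n + 1)) := by ring
    _ ≤ x ^ (n + 2) / (n + 1).factorial * (2 / (n + 2)) := by gcongr
    _ = 2 * (x ^ (n + 2) / (n + 2).factorial) := by rw [hfac]; field_simp

lemma rpow_div_succ_mul_pow_succ_div_factorial_le {p x : ℝ} (hp0 : 0 ≤ p) (hp1 : p ≤ 1)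
    (hx : 0 ≤ x) (n : ℕ) :
    (x / (n + 1)) ^ p * x ^ (n + 1) / (n + 1).factorial ≤
      2 ^ p * ((1 - p) * (x ^ (n + 1) / (n + 1).factorial) +
        p * (x ^ (n + 2) / (n + 2).factorial)) := by
  have tangent := rpow_le_tangent_line (div_nonneg hx n.cast_add_one_pos.le) two_pos hp0 hp1
  have shift := div_succ_mul_pow_succ_div_factorial_le hx n
  calc (x / (n + 1)) ^ p * x ^ (n + 1) / (n + 1).factorial
      = (x / (n + 1)) ^ p * (x ^ (n + 1) / (n + 1).factorial) := mul_div_assoc _ _ _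
    _ ≤ 2 ^ p * (1 - p + p * (x / (n + 1) / 2)) * (x ^ (n + 1) / (n + 1).factorial) := by
        gcongr
    _ = 2 ^ p * ((1 - p) * (x ^ (n + 1) / (n + 1).factorial) +
        p / 2 * (x / (n + 1) * (x ^ (n + 1) / (n + 1).factorial))) := by ring
    _ ≤ 2 ^ p * ((1 - p) * (x ^ (n + 1) / (n + 1).factorial) +
        p / 2 * (2 * (x ^ (n + 2) / (n + 2).factorial))) := by gcongr
    _ = _ := by ring

theorem stmt_1 (p : ℝ) (hp0 : 0 ≤ p) (hp1 : p ≤ 1) (x : ℝ) (hx : 0 < x) :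
    (∑' n : ℕ, (x / ((n : ℝ) + 1)) ^ p * x ^ (n + 1) / (n + 1).factorial)
      ≤ 2 ^ p * (Real.exp x - 1) := by
  have hw := hasSum_pow_succ_div_factorial x
  have hw_shift : HasSum (fun n : ℕ => x ^ (n + 2) / (n + 2).factorial) (exp x - 1 - x) := by
    simpa using (hasSum_nat_add_iff' 1).2 hw
  have hbound := ((hw.mul_left (1 - p)).add (hw_shift.mul_left p)).mul_left (2 ^ p)
  have hterm := rpow_div_succ_mul_pow_succ_div_factorial_le hp0 hp1 hx.le
  have hsummable :
      Summable (fun n : ℕ => (x / ((n : ℝ) + 1)) ^ p * x ^ (n + 1) / (n + 1).factorial) :=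
    hbound.summable.of_nonneg_of_le (fun n => by positivity) hterm
  calc _ ≤ 2 ^ p * ((1 - p) * (exp x - 1) + p * (exp x - 1 - x)) :=
        hasSum_le hterm hsummable.hasSum hbound
    _ ≤ 2 ^ p * (exp x - 1) := by gcongr; linarith [mul_nonneg hp0 hx.le]
end

section
/- Assume the kernel f is symmetric (f(x,y)=f(y,x)), satisfies f(x,y) ≤ M|y−x|^{−α−d}, and inf_x ∫_{|y−x|>ε} f(x,y) dy ≥ aε^{−α} for all ε>0, with α ∈ (0,2). Let f_ε(x,y)=1_{|y−x|>ε}f(x,y), b_ε(x)=∫f_ε(x,y)dy, b̄_ε = sup_x b_ε(x), and define the iterated kernels f_{n,ε} as in the approximation scheme (f_{1,ε}=f_ε, f_{n+1,ε}(x,y)=∫f_{n,ε}(x,z)f_ε(z,y)dz + (b̄_ε−b_ε(y))f_{n,ε}(x,y) + (b̄_ε−b_ε(x))^n f_ε(x,y)). Then there is a constant C = C(M,a,α,d) such that f_{n,ε}(x,y) ≤ C b̄_ε^{d/α} (b̄_ε^n − (b̄_ε − b_ε(x))^n) for all x,y ∈ ℝ^d, ε > 0, n ≥ 1. -/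
open Real MeasureTheory

theorem stmt_10 (d : ℕ) (hd : 1 ≤ d) (α M a : ℝ) (hα : α ∈ Set.Ioo (0:ℝ) 2)
    (hM : 0 < M) (ha : 0 < a)
    (f : EuclideanSpace ℝ (Fin d) → EuclideanSpace ℝ (Fin d) → ℝ)
    (hf0 : ∀ x y, 0 ≤ f x y)
    (hfm : Measurable (Function.uncurry f))
    (hsym : ∀ x y, f x y = f y x)
    (hfb : ∀ x y, x ≠ y → f x y ≤ M * ‖y - x‖ ^ (-(α + d)))
    (fε : ℝ → EuclideanSpace ℝ (Fin d) → EuclideanSpace ℝ (Fin d) → ℝ)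
    (hfε : ∀ ε x y, fε ε x y = if ε < ‖y - x‖ then f x y else 0)
    (b : ℝ → EuclideanSpace ℝ (Fin d) → ℝ)
    (hb : ∀ ε x, b ε x = ∫ y, fε ε x y)
    (hlow : ∀ ε : ℝ, 0 < ε → ∀ x, a * ε ^ (-α) ≤ b ε x)
    (B : ℝ → ℝ) (hbdd : ∀ ε : ℝ, 0 < ε → BddAbove (Set.range (b ε)))
    (hB : ∀ ε, B ε = ⨆ x, b ε x)
    (F : ℝ → ℕ → EuclideanSpace ℝ (Fin d) → EuclideanSpace ℝ (Fin d) → ℝ)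
    (hF1 : ∀ ε, F ε 1 = fε ε)
    (hrec : ∀ ε : ℝ, 0 < ε → ∀ n, 1 ≤ n → ∀ x y,
      F ε (n + 1) x y = (∫ z, F ε n x z * fε ε z y) + (B ε - b ε y) * F ε n x y
        + (B ε - b ε x) ^ n * fε ε x y) :
    ∃ C : ℝ, 0 < C ∧ ∀ ε : ℝ, 0 < ε → ∀ n, 1 ≤ n → ∀ x y,
      F ε n x y ≤ C * (B ε) ^ ((d : ℝ) / α) * ((B ε) ^ n - (B ε - b ε x) ^ n) := by
  obtain ⟨hα0, hα2⟩ := hα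
  have hd0 : (0:ℝ) < d := by exact_mod_cast hd
  set C0 : ℝ := M * a ^ (-((d:ℝ)/α) - 1) with hC0
  have hC0pos : 0 < C0 := by positivity
  refine ⟨C0, hC0pos, ?_⟩
  intro ε hε
  have hbB : ∀ x, b ε x ≤ B ε := fun x => (hB ε) ▸ le_ciSup (hbdd ε hε) x
  have hb0 : ∀ x, 0 < b ε x := fun x =>
    lt_of_lt_of_le (by positivity) (hlow ε hε x)
  have hB0 : 0 < B ε := lt_of_lt_of_le (hb0 0) (hbB 0)
  have hfε0 : ∀ x y, 0 ≤ fε ε x y := by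
    intro x y; rw [hfε]; split_ifs
    exacts [hf0 x y, le_rfl]
  have hsymε : ∀ x y, fε ε x y = fε ε y x := by
    intro x y; rw [hfε, hfε, norm_sub_rev, hsym]
  -- key pointwise bound
  have key : ∀ x y, fε ε x y ≤ C0 * B ε ^ ((d:ℝ)/α) * b ε x := by
    intro x y
    have hα0' : α ≠ 0 := ne_of_gt hα0
    have e1 : (ε^(-α))^((d:ℝ)/α) = ε^(-(d:ℝ)) := by
      rw [← Real.rpow_mul hε.le]; congr 1; field_simp
    have e2 : ε ^ (-(α+(d:ℝ))) = ε^(-α) * ε^(-(d:ℝ)) := by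
      rw [← Real.rpow_add hε]; ring_nf
    have h3 : ε^(-α) ≤ b ε x / a := (le_div_iff₀' ha).mpr (hlow ε hε x)
    have h3' : ε^(-α) ≤ B ε / a := le_trans h3 (by gcongr; exact hbB x)
    have h4 : (ε^(-α))^((d:ℝ)/α) ≤ (B ε / a)^((d:ℝ)/α) :=
      Real.rpow_le_rpow (Real.rpow_nonneg hε.le _) h3' (by positivity)
    have hRHS : M * ε ^ (-(α+(d:ℝ))) ≤ C0 * B ε ^ ((d:ℝ)/α) * b ε x := by
      calc M * ε ^ (-(α+(d:ℝ))) = M * (ε^(-α) * (ε^(-α))^((d:ℝ)/α)) := by rw [e2, e1]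
        _ ≤ M * ((b ε x / a) * (B ε / a)^((d:ℝ)/α)) := by
            apply mul_le_mul_of_nonneg_left _ hM.le
            exact mul_le_mul h3 h4 (Real.rpow_nonneg (Real.rpow_nonneg hε.le _) _)
              (div_nonneg (hb0 x).le ha.le)
        _ = C0 * B ε ^ ((d:ℝ)/α) * b ε x := by
            rw [hC0, Real.div_rpow hB0.le ha.le, Real.rpow_sub ha, Real.rpow_neg ha.le,
              Real.rpow_one]
            field_simp
    rw [hfε]
    split_ifs with h
    · have hεnorm : (0:ℝ) < ‖y - x‖ := lt_trans hε h
      have hxy : x ≠ y := by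
        intro hxy; rw [hxy, sub_self, norm_zero] at hεnorm; exact lt_irrefl 0 hεnorm
      calc f x y ≤ M * ‖y - x‖ ^ (-(α + d)) := hfb x y hxy
        _ ≤ M * ε ^ (-(α+(d:ℝ))) := by
            apply mul_le_mul_of_nonneg_left _ hM.le
            exact Real.rpow_le_rpow_of_nonpos hε h.le (by push_cast; linarith)
        _ ≤ C0 * B ε ^ ((d:ℝ)/α) * b ε x := hRHS
    · exact mul_nonneg (mul_nonneg hC0pos.le (Real.rpow_nonneg hB0.le _)) (hb0 x).le
  -- measurability
  have hmeas : ∀ y, Measurable (fun z => fε ε z y) := by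
    intro y
    have : (fun z => fε ε z y) = fun z => if ε < ‖y - z‖ then f z y else 0 := by
      funext z; rw [hfε]
    rw [this]
    exact Measurable.ite (measurableSet_lt measurable_const
        ((continuous_const.sub continuous_id).norm.measurable))
      (hfm.comp (measurable_id.prodMk measurable_const)) measurable_const
  -- integrability
  have hrd : (d:ℝ) < α + d := by linarith
  have hrpos : (0:ℝ) < α + d := by linarith
  have hint : ∀ y, Integrable (fun z => fε ε z y) := by
    intro y
    have h0 : Integrable (fun z : EuclideanSpace ℝ (Fin d) => (1 + ‖z‖) ^ (-(α+(d:ℝ)))) :=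
      integrable_one_add_norm (by rw [finrank_euclideanSpace_fin]; exact hrd)
    have hg : Integrable (fun z : EuclideanSpace ℝ (Fin d) =>
        ((1+ε)/ε)^(α+(d:ℝ)) * (M * (1 + ‖z - y‖) ^ (-(α+(d:ℝ))))) :=
      (((h0.comp_sub_right y).const_mul M).const_mul _)
    refine hg.mono' (hmeas y).aestronglyMeasurable (Filter.Eventually.of_forall fun z => ?_)
    rw [Real.norm_of_nonneg (hfε0 z y), hfε]
    split_ifs with h
    · have hs : (0:ℝ) < ‖y - z‖ := lt_trans hε h
      have hzy : z ≠ y := by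
        intro hzy; rw [hzy, sub_self, norm_zero] at hs; exact lt_irrefl 0 hs
      have hzz : ‖z - y‖ = ‖y - z‖ := norm_sub_rev _ _
      set s := ‖y - z‖ with hsdef
      have h1 : 1 + s ≤ ((1+ε)/ε) * s := by
        rw [div_mul_eq_mul_div, le_div_iff₀ hε]
        nlinarith
      have hcs : (0:ℝ) < ((1+ε)/ε) * s := by positivity
      have h2 : (((1+ε)/ε) * s) ^ (-(α+(d:ℝ))) ≤ (1 + s) ^ (-(α+(d:ℝ))) :=
        Real.rpow_le_rpow_of_nonpos (by positivity) h1 (by linarith)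
      have h5 : s ^ (-(α+(d:ℝ))) ≤ ((1+ε)/ε)^(α+(d:ℝ)) * (1 + s) ^ (-(α+(d:ℝ))) := by
        have hmul : (((1+ε)/ε) * s) ^ (-(α+(d:ℝ)))
            = ((1+ε)/ε) ^ (-(α+(d:ℝ))) * s ^ (-(α+(d:ℝ))) :=
          Real.mul_rpow (by positivity) hs.le
        have hc : (0:ℝ) < ((1+ε)/ε) ^ (α+(d:ℝ)) := by positivity
        have hone : ((1+ε)/ε)^(α+(d:ℝ)) * ((1+ε)/ε)^(-(α+(d:ℝ))) = 1 := by
          rw [← Real.rpow_add (by positivity : (0:ℝ) < (1+ε)/ε)]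
          rw [show α + (d:ℝ) + -(α+(d:ℝ)) = 0 by ring, Real.rpow_zero]
        have : s ^ (-(α+(d:ℝ)))
            = ((1+ε)/ε)^(α+(d:ℝ)) * ((((1+ε)/ε) * s) ^ (-(α+(d:ℝ)))) := by
          rw [hmul, ← mul_assoc, hone, one_mul]
        rw [this]
        exact mul_le_mul_of_nonneg_left h2 hc.le
      calc f z y ≤ M * ‖y - z‖ ^ (-(α + d)) := hfb z y hzy
        _ ≤ M * (((1+ε)/ε)^(α+(d:ℝ)) * (1 + s) ^ (-(α+(d:ℝ)))) :=
            mul_le_mul_of_nonneg_left h5 hM.le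
        _ = ((1+ε)/ε)^(α+(d:ℝ)) * (M * (1 + ‖z - y‖) ^ (-(α+(d:ℝ)))) := by
            rw [hzz]; ring
    · positivity
  have hbInt : ∀ y, (∫ z, fε ε z y) = b ε y := by
    intro y
    rw [hb ε y]
    exact congrArg (integral volume) (funext fun z => hsymε z y)
  -- nonnegativity of F
  have hFpos : ∀ n, 1 ≤ n → ∀ x y, 0 ≤ F ε n x y := by
    intro n hn
    induction n, hn using Nat.le_induction with
    | base => intro x y; rw [hF1]; exact hfε0 x y
    | succ n hn ih =>
      intro x y
      rw [hrec ε hε n hn]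
      have h1 : 0 ≤ ∫ z, F ε n x z * fε ε z y :=
        integral_nonneg fun z => mul_nonneg (ih x z) (hfε0 z y)
      have h2 : 0 ≤ (B ε - b ε y) * F ε n x y :=
        mul_nonneg (sub_nonneg.2 (hbB y)) (ih x y)
      have h3 : 0 ≤ (B ε - b ε x) ^ n * fε ε x y :=
        mul_nonneg (pow_nonneg (sub_nonneg.2 (hbB x)) n) (hfε0 x y)
      linarith
  -- main induction
  intro n hn
  induction n, hn using Nat.le_induction with
  | base =>
    intro x y
    rw [hF1]
    calc fε ε x y ≤ C0 * B ε ^ ((d:ℝ)/α) * b ε x := key x y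
      _ = C0 * B ε ^ ((d:ℝ)/α) * (B ε ^ 1 - (B ε - b ε x) ^ 1) := by ring
  | succ n hn ih =>
    intro x y
    rw [hrec ε hε n hn]
    set K := C0 * B ε ^ ((d:ℝ)/α) * (B ε ^ n - (B ε - b ε x) ^ n) with hK
    have t1 : (∫ z, F ε n x z * fε ε z y) ≤ K * b ε y := by
      have heq : (∫ z, K * fε ε z y) = K * b ε y := by
        rw [integral_const_mul, hbInt]
      rw [← heq]
      refine integral_mono_of_nonneg
        (Filter.Eventually.of_forall fun z => mul_nonneg (hFpos n hn x z) (hfε0 z y))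
        ((hint y).const_mul K)
        (Filter.Eventually.of_forall fun z =>
          mul_le_mul_of_nonneg_right (ih x z) (hfε0 z y))
    have t2 : (B ε - b ε y) * F ε n x y ≤ (B ε - b ε y) * K :=
      mul_le_mul_of_nonneg_left (ih x y) (sub_nonneg.2 (hbB y))
    have t3 : (B ε - b ε x) ^ n * fε ε x y
        ≤ (B ε - b ε x) ^ n * (C0 * B ε ^ ((d:ℝ)/α) * b ε x) :=
      mul_le_mul_of_nonneg_left (key x y) (pow_nonneg (sub_nonneg.2 (hbB x)) n)
    have hfinal : K * b ε y + (B ε - b ε y) * K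
        + (B ε - b ε x) ^ n * (C0 * B ε ^ ((d:ℝ)/α) * b ε x)
        = C0 * B ε ^ ((d:ℝ)/α) * (B ε ^ (n+1) - (B ε - b ε x) ^ (n+1)) := by
      rw [hK]; ring
    linarith
end

section
/- Suppose the iterated kernels satisfy f_{n,ε}(x,y) ≤ C₁ b̄_ε^{n+d/α} n^{−d/α} for all n ≥ 1, x, y ∈ ℝ^d (where b̄_ε = sup_x ∫f_ε(x,y)dy, α ∈ (0,2), d ≥ 1), and Γ_ε^n φ(x) = ∫ φ(z)f_{n,ε}(x,z)dz + (b̄_ε−b_ε(x))^n φ(x). Then there is C (depending on C₁, d, α) such that for every nonnegative bounded integrable φ and t > 0: e^{tA_ε}φ(x) ≤ C t^{−d/α} ∫ φ(y) dy + e^{−t b_ε(x)} φ(x). -/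
/-!
Expanding `Γ^[n] φ x` splits `e^{-tB} ∑ tⁿ/n! Γ^[n] φ x` into a diagonal part, which sums to
`e^{-t b x} φ x` since `e^{-tB} e^{t(B - b x)} = e^{-t b x}`, and a kernel part bounded by
`C₁ t^{-p} (∫ φ) e^{-tB} ∑ (tB)^{n+p} n^{-p} / n!` with `p = d/α`. The last series is at most
a constant times `e^{tB}`: writing its term as `xⁿ/n! · (x/n)^p ≤ xⁿ/n! · (1 + (x/n)^m)` with
`m = ⌈p⌉`, the extra factor is absorbed by `(n+m)! ≤ (m+1)^m n! n^m`.
-/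

open Real MeasureTheory

lemma integral_mul_le_integral_mul_of_le {α : Type*} [MeasurableSpace α] {μ : Measure α}
    {φ F : α → ℝ} {Cφ K : ℝ} (hφ0 : ∀ y, 0 ≤ φ y) (hφC : ∀ y, φ y ≤ Cφ)
    (hφ : Integrable φ μ) (hF : Integrable F μ) (hFK : ∀ y, F y ≤ K) :
    ∫ y, φ y * F y ∂μ ≤ (∫ y, φ y ∂μ) * K := by
  have hφF : Integrable (fun y ↦ φ y * F y) μ :=
    hF.bdd_mul hφ.aestronglyMeasurable
      (Filter.Eventually.of_forall fun y ↦ (abs_of_nonneg (hφ0 y)).trans_le (hφC y))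
  rw [← integral_mul_const]
  exact integral_mono hφF (hφ.mul_const K) fun y ↦ mul_le_mul_of_nonneg_left (hFK y) (hφ0 y)

lemma rpow_le_one_add_pow {r p : ℝ} {m : ℕ} (hr : 0 ≤ r) (hp : 0 ≤ p) (hpm : p ≤ m) :
    r ^ p ≤ 1 + r ^ m := by
  rcases le_or_gt r 1 with hr1 | hr1
  · linarith [rpow_le_one hr hr1 hp, pow_nonneg hr m]
  · linarith [rpow_natCast r m ▸ rpow_le_rpow_of_exponent_le hr1.le hpm]

lemma rpow_natCast_add_mul_rpow_neg {x p : ℝ} (hx : 0 ≤ x) (hp : 0 ≤ p) (n : ℕ) :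
    x ^ ((n : ℝ) + p) * (n : ℝ) ^ (-p) = x ^ n * (x / n) ^ p := by
  rcases eq_or_lt_of_le hp with rfl | hp
  · simp
  rw [rpow_add' hx (by positivity), rpow_natCast, div_rpow hx n.cast_nonneg,
    rpow_neg n.cast_nonneg, div_eq_mul_inv, mul_assoc]

lemma pow_mul_rpow_natCast_add {t B : ℝ} (ht : 0 < t) (hB : 0 ≤ B) (n : ℕ) (p : ℝ) :
    t ^ n * B ^ ((n : ℝ) + p) = t ^ (-p) * (t * B) ^ ((n : ℝ) + p) := by
  rw [mul_rpow ht.le hB, rpow_add ht, rpow_natCast, rpow_neg ht.le]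
  field_simp

section

open scoped Nat

lemma Nat.factorial_add_le_pow_mul (m : ℕ) {n : ℕ} (hn : 1 ≤ n) :
    (n + m)! ≤ (m + 1) ^ m * (n ! * n ^ m) := by
  calc (n + m)! = n ! * (n + 1).ascFactorial m := (Nat.factorial_mul_ascFactorial n m).symm
    _ ≤ n ! * (n + m) ^ m := Nat.mul_le_mul_left _ (Nat.ascFactorial_le_pow_add n m)
    _ ≤ n ! * (n * (m + 1)) ^ m := by gcongr; nlinarith
    _ = (m + 1) ^ m * (n ! * n ^ m) := by rw [Nat.mul_pow]; ring

lemma Real.hasSum_pow_div_factorial (x : ℝ) : HasSum (fun n : ℕ ↦ x ^ n / n !) (exp x) :=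
  exp_eq_exp_ℝ ▸ NormedSpace.expSeries_div_hasSum_exp x

lemma pow_div_factorial_mul_div_pow_le {x : ℝ} (hx : 0 ≤ x) (m n : ℕ) :
    x ^ n / n ! * (x / n) ^ m ≤ ((m : ℝ) + 1) ^ m * (x ^ (n + m) / (n + m)!) := by
  rcases Nat.eq_zero_or_pos n with rfl | hn
  · rcases Nat.eq_zero_or_pos m with rfl | hm
    · simp
    · simp only [Nat.cast_zero, div_zero, zero_pow hm.ne', mul_zero]
      positivity
  have hfac : ((n + m)! : ℝ) ≤ ((m : ℝ) + 1) ^ m * (n ! * (n : ℝ) ^ m) := by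
    exact_mod_cast Nat.factorial_add_le_pow_mul m hn
  rw [div_pow, pow_add, div_mul_div_comm, mul_div_assoc',
    div_le_div_iff₀ (by positivity) (by positivity)]
  calc x ^ n * x ^ m * ((n + m)! : ℝ)
      ≤ x ^ n * x ^ m * (((m : ℝ) + 1) ^ m * (n ! * (n : ℝ) ^ m)) := by gcongr
    _ = ((m : ℝ) + 1) ^ m * (x ^ n * x ^ m) * (n ! * (n : ℝ) ^ m) := by ring

/-- The paper's `x^{n+p} / (n! n^p)`; at `n = 0` it is `0^{-p}`, i.e. `0` for `p > 0` and `1` for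
`p = 0`. -/
noncomputable def weightedExpTerm (p x : ℝ) (n : ℕ) : ℝ :=
  x ^ ((n : ℝ) + p) * (n : ℝ) ^ (-p) / n !

lemma weightedExpTerm_nonneg (p : ℝ) {x : ℝ} (hx : 0 ≤ x) (n : ℕ) :
    0 ≤ weightedExpTerm p x n := by
  unfold weightedExpTerm; positivity

lemma weightedExpTerm_le {x p : ℝ} {m : ℕ} (hx : 0 ≤ x) (hp : 0 ≤ p) (hpm : p ≤ m) (n : ℕ) :
    weightedExpTerm p x n ≤ x ^ n / n ! + ((m : ℝ) + 1) ^ m * (x ^ (n + m) / (n + m)!) := by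
  rw [weightedExpTerm, rpow_natCast_add_mul_rpow_neg hx hp, mul_div_right_comm]
  calc x ^ n / n ! * (x / n) ^ p ≤ x ^ n / n ! * (1 + (x / n) ^ m) := by
        gcongr; exact rpow_le_one_add_pow (by positivity) hp hpm
    _ ≤ x ^ n / n ! + ((m : ℝ) + 1) ^ m * (x ^ (n + m) / (n + m)!) := by
        linarith [pow_div_factorial_mul_div_pow_le hx m n]

lemma summable_weightedExpTerm_and_tsum_le {x p : ℝ} {m : ℕ} (hx : 0 ≤ x) (hp : 0 ≤ p)
    (hpm : p ≤ m) :
    Summable (weightedExpTerm p x) ∧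
      ∑' n, weightedExpTerm p x n ≤ (1 + ((m : ℝ) + 1) ^ m) * exp x := by
  have hexp := hasSum_pow_div_factorial x
  have hshift : Summable (fun n : ℕ ↦ x ^ (n + m) / (n + m)!) :=
    (summable_nat_add_iff m).mpr hexp.summable
  have hshift_le : ∑' n : ℕ, x ^ (n + m) / (n + m)! ≤ exp x :=
    hexp.tsum_eq ▸ hshift.tsum_le_tsum_of_inj (· + m) (add_left_injective m)
      (fun _ _ ↦ by positivity) (fun _ ↦ le_rfl) hexp.summable
  have hdom := hexp.summable.add (hshift.mul_left (((m : ℝ) + 1) ^ m))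
  have hle := weightedExpTerm_le hx hp hpm
  have hsum := hdom.of_nonneg_of_le (weightedExpTerm_nonneg p hx) hle
  refine ⟨hsum, (hsum.tsum_le_tsum hle hdom).trans ?_⟩
  rw [hexp.summable.tsum_add (hshift.mul_left _), tsum_mul_left, hexp.tsum_eq]
  nlinarith [pow_nonneg (by positivity : (0 : ℝ) ≤ (m : ℝ) + 1) m]

lemma exp_neg_mul_tsum_le {a : ℕ → ℝ} {x c u K p : ℝ} {m : ℕ} (hx : 0 ≤ x) (hp : 0 ≤ p)
    (hpm : p ≤ m) (hK : 0 ≤ K) (ha0 : ∀ n, 0 ≤ a n)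
    (ha : ∀ n, a n ≤ c ^ n / n ! * u + K * weightedExpTerm p x n) :
    exp (-x) * ∑' n, a n ≤ exp (c - x) * u + K * (1 + ((m : ℝ) + 1) ^ m) := by
  obtain ⟨hg, hg_le⟩ := summable_weightedExpTerm_and_tsum_le hx hp hpm
  have hdiag := (hasSum_pow_div_factorial c).mul_right u
  have hdom := hdiag.summable.add (hg.mul_left K)
  have hsum_le := (hdom.of_nonneg_of_le ha0 ha).tsum_le_tsum ha hdom
  rw [hdiag.summable.tsum_add (hg.mul_left K), tsum_mul_left, hdiag.tsum_eq] at hsum_le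
  calc exp (-x) * ∑' n, a n
      ≤ exp (-x) * (exp c * u + K * ((1 + ((m : ℝ) + 1) ^ m) * exp x)) := by
        gcongr; exact hsum_le.trans (by gcongr)
    _ = exp (c - x) * u + K * (1 + ((m : ℝ) + 1) ^ m) * (exp (-x) * exp x) := by
        rw [sub_eq_add_neg, exp_add]; ring
    _ = exp (c - x) * u + K * (1 + ((m : ℝ) + 1) ^ m) := by rw [← exp_add]; simp

lemma pow_div_factorial_mul_le_of_le {t B β u I G C₁ p : ℝ} {n : ℕ} (ht : 0 < t) (hB : 0 ≤ B)
    (hG : G ≤ I * (C₁ * B ^ ((n : ℝ) + p) * (n : ℝ) ^ (-p)) + (B - β) ^ n * u) :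
    t ^ n / n ! * G ≤
      (t * (B - β)) ^ n / n ! * u + C₁ * I * t ^ (-p) * weightedExpTerm p (t * B) n := by
  calc t ^ n / n ! * G
      ≤ t ^ n / n ! * (I * (C₁ * B ^ ((n : ℝ) + p) * (n : ℝ) ^ (-p)) + (B - β) ^ n * u) := by
        gcongr
    _ = _ := by
        rw [weightedExpTerm, mul_pow]
        linear_combination I * C₁ * (n : ℝ) ^ (-p) / n ! * pow_mul_rpow_natCast_add ht hB n p

end

theorem stmt_14_general (d : ℕ) (α : ℝ) (hα : α ∈ Set.Ioo (0:ℝ) 2)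
    (b : EuclideanSpace ℝ (Fin d) → ℝ)
    (B : ℝ) (hbB : ∀ x, b x ≤ B) (hB0 : 0 ≤ B)
    (F : ℕ → EuclideanSpace ℝ (Fin d) → EuclideanSpace ℝ (Fin d) → ℝ)
    (hF0 : ∀ n x y, 0 ≤ F n x y)
    (hFint : ∀ n x, Integrable (F n x))
    (C₁ : ℝ) (hC₁ : 0 < C₁)
    (hFb : ∀ n : ℕ, 1 ≤ n → ∀ x y,
      F n x y ≤ C₁ * B ^ ((n : ℝ) + (d : ℝ) / α) * (n : ℝ) ^ (-(d : ℝ) / α))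
    (Γ : (EuclideanSpace ℝ (Fin d) → ℝ) → EuclideanSpace ℝ (Fin d) → ℝ)
    (hΓn : ∀ n, 1 ≤ n → ∀ (φ : EuclideanSpace ℝ (Fin d) → ℝ) x,
      (Γ^[n] φ) x = (∫ z, φ z * F n x z) + (B - b x) ^ n * φ x) :
    ∃ C : ℝ, 0 < C ∧
      ∀ (φ : EuclideanSpace ℝ (Fin d) → ℝ) (Cφ : ℝ), Measurable φ →
        (∀ y, 0 ≤ φ y) → (∀ y, φ y ≤ Cφ) → Integrable φ →
        ∀ t : ℝ, 0 < t → ∀ x,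
          Real.exp (-t * B) * (∑' n : ℕ, t ^ n / (n.factorial : ℝ) * (Γ^[n] φ) x)
            ≤ C * t ^ (-(d : ℝ) / α) * (∫ y, φ y) + Real.exp (-t * b x) * φ x := by
  simp only [neg_div] at hFb ⊢
  set p : ℝ := (d : ℝ) / α
  have hp : 0 ≤ p := div_nonneg d.cast_nonneg hα.1.le
  refine ⟨C₁ * (1 + ((⌈p⌉₊ : ℝ) + 1) ^ ⌈p⌉₊), by positivity, ?_⟩
  intro φ Cφ _ hφ0 hφC hφ t ht x
  have hΓ0 : ∀ n, 0 ≤ (Γ^[n] φ) x := by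
    rintro (_ | n)
    · exact hφ0 x
    rw [hΓn _ n.succ_pos φ x]
    exact add_nonneg (integral_nonneg fun z ↦ mul_nonneg (hφ0 z) (hF0 _ x z))
      (mul_nonneg (pow_nonneg (sub_nonneg.mpr (hbB x)) _) (hφ0 x))
  have hK : 0 ≤ C₁ * (∫ y, φ y) * t ^ (-p) :=
    mul_nonneg (mul_nonneg hC₁.le (integral_nonneg hφ0)) (rpow_nonneg ht.le _)
  have hterm : ∀ n : ℕ, t ^ n / n.factorial * (Γ^[n] φ) x ≤
      (t * (B - b x)) ^ n / n.factorial * φ x +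
        C₁ * (∫ y, φ y) * t ^ (-p) * weightedExpTerm p (t * B) n := by
    rintro (_ | n)
    · simpa using mul_nonneg hK (weightedExpTerm_nonneg p (mul_nonneg ht.le hB0) 0)
    refine pow_div_factorial_mul_le_of_le ht hB0 ?_
    rw [hΓn _ n.succ_pos φ x]
    gcongr
    exact integral_mul_le_integral_mul_of_le hφ0 hφC hφ (hFint _ x) (hFb _ n.succ_pos x)
  have key := exp_neg_mul_tsum_le (mul_nonneg ht.le hB0) hp (Nat.le_ceil p)
    hK (fun n ↦ mul_nonneg (by positivity) (hΓ0 n)) hterm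
  rw [show t * (B - b x) - t * B = -t * b x by ring, ← neg_mul] at key
  linarith

theorem stmt_14 (d : ℕ) (hd : 1 ≤ d) (α : ℝ) (hα : α ∈ Set.Ioo (0:ℝ) 2)
    (fε : EuclideanSpace ℝ (Fin d) → EuclideanSpace ℝ (Fin d) → ℝ)
    (hf0 : ∀ x y, 0 ≤ fε x y)
    (hfint : ∀ x, Integrable (fε x))
    (b : EuclideanSpace ℝ (Fin d) → ℝ) (hb : ∀ x, b x = ∫ y, fε x y)
    (B : ℝ) (hbB : ∀ x, b x ≤ B) (hB0 : 0 ≤ B)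
    (F : ℕ → EuclideanSpace ℝ (Fin d) → EuclideanSpace ℝ (Fin d) → ℝ)
    (hF0 : ∀ n x y, 0 ≤ F n x y)
    (hFint : ∀ n x, Integrable (F n x))
    (C₁ : ℝ) (hC₁ : 0 < C₁)
    (hFb : ∀ n : ℕ, 1 ≤ n → ∀ x y,
      F n x y ≤ C₁ * B ^ ((n : ℝ) + (d : ℝ) / α) * (n : ℝ) ^ (-(d : ℝ) / α))
    (Γ : (EuclideanSpace ℝ (Fin d) → ℝ) → EuclideanSpace ℝ (Fin d) → ℝ)
    (hΓn : ∀ n, 1 ≤ n → ∀ (φ : EuclideanSpace ℝ (Fin d) → ℝ) x,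
      (Γ^[n] φ) x = (∫ z, φ z * F n x z) + (B - b x) ^ n * φ x) :
    ∃ C : ℝ, 0 < C ∧
      ∀ (φ : EuclideanSpace ℝ (Fin d) → ℝ) (Cφ : ℝ), Measurable φ →
        (∀ y, 0 ≤ φ y) → (∀ y, φ y ≤ Cφ) → Integrable φ →
        ∀ t : ℝ, 0 < t → ∀ x,
          Real.exp (-t * B) * (∑' n : ℕ, t ^ n / (n.factorial : ℝ) * (Γ^[n] φ) x)
            ≤ C * t ^ (-(d : ℝ) / α) * (∫ y, φ y) + Real.exp (-t * b x) * φ x :=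
  stmt_14_general d α hα b B hbB hB0 F hF0 hFint C₁ hC₁ hFb Γ hΓn
end
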